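/- arXiv:1705.09970 — 4 statements merged into one kernel-verified Lean document; each statement's English description precedes it below -/
import Mathlib

section
/- (Proposition, collapse of the concretization sum.) If α and Prγ are strongly compatible, then for all concrete states z_i and z_o, Prext z_i z_o = Prγ (α z_o) z_o * Pr𝒜 (α z_i) (α z_o); that is, the sum defining the concrete semantics collapses to the single term with a_o = α z_o. -/
theorem concretization_sum_collapse
    {Z A : Type*} [Fintype Z] [Fintype A]
    (α : Z → A) (Prγ : A → Z → ℝ) (PrA : A → A → ℝ)
    (hγnn : ∀ a z, 0 ≤ Prγ a z) (hγsum : ∀ a, ∑ z, Prγ a z = 1)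
    (hAnn : ∀ a a', 0 ≤ PrA a a') (hAsum : ∀ a, ∑ a', PrA a a' = 1)
    (hcompat : ∀ z, 0 < Prγ (α z) z)
    (hstrong : ∀ a z, 0 < Prγ a z → ∀ a', a' ≠ a → Prγ a' z = 0) :
    ∀ (zi zo : Z),
      (∑ ao : A, Prγ ao zo * PrA (α zi) ao)
        = Prγ (α zo) zo * PrA (α zi) (α zo) := by
  intro zi zo
  rw [Fintype.sum_eq_single (α zo)]
  intro a ha
  rw [hstrong (α zo) zo (hcompat zo) a ha, zero_mul]
end

section
/- (Theorem: Concretization distribution invariance.) Let α and Prγ be strongly compatible. Then for every concrete input state z_i and every abstract output state a_o, ∑_{z_o ∈ γ↓ a_o} Prext z_i z_o = Pr𝒜 (α z_i) a_o, where γ↓ a = {z | Prγ a z > 0}. In particular this quantity does not depend on the choice of strongly compatible concretization distribution Prγ. -/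
theorem concretization_distribution_invariance
    {Z A : Type*} [Fintype Z] [Fintype A]
    (α : Z → A) (Prγ : A → Z → ℝ) (PrA : A → A → ℝ)
    (hγnn : ∀ a z, 0 ≤ Prγ a z) (hγsum : ∀ a, ∑ z, Prγ a z = 1)
    (hAnn : ∀ a a', 0 ≤ PrA a a') (hAsum : ∀ a, ∑ a', PrA a a' = 1)
    (hcompat : ∀ z, 0 < Prγ (α z) z)
    (hstrong : ∀ a z, 0 < Prγ a z → ∀ a', a' ≠ a → Prγ a' z = 0) :
    ∀ (zi : Z) (ao : A),
      (∑ zo ∈ Finset.univ.filter (fun zo : Z => 0 < Prγ ao zo),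
          ∑ a : A, Prγ a zo * PrA (α zi) a)
        = PrA (α zi) ao := by
  intro zi ao
  have h1 : ∀ zo ∈ Finset.univ.filter (fun zo : Z => 0 < Prγ ao zo),
      (∑ a : A, Prγ a zo * PrA (α zi) a) = Prγ ao zo * PrA (α zi) ao := by
    intro zo hzo
    simp only [Finset.mem_filter] at hzo
    rw [Finset.sum_eq_single ao]
    · intro b _ hb
      rw [hstrong ao zo hzo.2 b hb, zero_mul]
    · intro h; exact absurd (Finset.mem_univ ao) h
  rw [Finset.sum_congr rfl h1, ← Finset.sum_mul]
  have h2 : (∑ zo ∈ Finset.univ.filter (fun zo : Z => 0 < Prγ ao zo), Prγ ao zo) = 1 := by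
    rw [← hγsum ao]
    apply Finset.sum_filter_of_ne
    intro z _ hz
    exact lt_of_le_of_ne (hγnn ao z) (Ne.symm hz)
  rw [h2, one_mul]
end

section
/- (Corollary of concretization distribution invariance.) Let Prγ¹ and Prγ² be two concretization distributions, each strongly compatible with the same abstraction function α, and let Pr𝒜 be a probabilistic abstraction. Let Prext¹ and Prext² denote the corresponding concrete semantics and γ¹↓, γ²↓ the corresponding lowered concretization functions. Then for every concrete input state z_i and abstract output state a_o, ∑_{z_o ∈ γ¹↓ a_o} Prext¹ z_i z_o = ∑_{z_o ∈ γ²↓ a_o} Prext² z_i z_o. -/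
lemma conc_inv_aux
    {Z A : Type*} [Fintype Z] [Fintype A]
    (α : Z → A) (Prγ : A → Z → ℝ) (PrA : A → A → ℝ)
    (hnn : ∀ a z, 0 ≤ Prγ a z) (hsum : ∀ a, ∑ z, Prγ a z = 1)
    (hcompat : ∀ z, 0 < Prγ (α z) z)
    (hstrong : ∀ a z, 0 < Prγ a z → ∀ a', a' ≠ a → Prγ a' z = 0)
    (zi : Z) (ao : A) :
    (∑ zo ∈ Finset.univ.filter (fun zo : Z => 0 < Prγ ao zo),
        ∑ a : A, Prγ a zo * PrA (α zi) a) = PrA (α zi) ao := by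
  have hmem : ∀ zo : Z, 0 < Prγ ao zo ↔ α zo = ao := by
    intro zo
    constructor
    · intro h
      by_contra hne
      have := hstrong ao zo h (α zo) hne
      exact absurd this (ne_of_gt (hcompat zo))
    · intro h; rw [← h]; exact hcompat zo
  have hinner : ∀ zo : Z, α zo = ao →
      (∑ a : A, Prγ a zo * PrA (α zi) a) = Prγ ao zo * PrA (α zi) ao := by
    intro zo h
    refine Finset.sum_eq_single ao ?_ (by simp)
    intro b _ hb
    have : Prγ b zo = 0 := hstrong (α zo) zo (hcompat zo) b (h ▸ hb)
    simp [this]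
  rw [Finset.sum_congr rfl (fun zo hz => hinner zo ((hmem zo).mp (by simpa using hz))),
      ← Finset.sum_mul]
  have : (∑ zo ∈ Finset.univ.filter (fun zo : Z => 0 < Prγ ao zo), Prγ ao zo) = 1 := by
    rw [← hsum ao]
    apply Finset.sum_subset (Finset.subset_univ _)
    intro z _ hz
    simp only [Finset.mem_filter, Finset.mem_univ, true_and, not_lt] at hz
    exact le_antisymm hz (hnn ao z)
  rw [this, one_mul]

theorem concretization_invariance_corollary
    {Z A : Type*} [Fintype Z] [Fintype A]
    (α : Z → A) (Prγ1 Prγ2 : A → Z → ℝ) (PrA : A → A → ℝ)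
    (h1nn : ∀ a z, 0 ≤ Prγ1 a z) (h1sum : ∀ a, ∑ z, Prγ1 a z = 1)
    (h2nn : ∀ a z, 0 ≤ Prγ2 a z) (h2sum : ∀ a, ∑ z, Prγ2 a z = 1)
    (hAnn : ∀ a a', 0 ≤ PrA a a') (hAsum : ∀ a, ∑ a', PrA a a' = 1)
    (h1compat : ∀ z, 0 < Prγ1 (α z) z)
    (h1strong : ∀ a z, 0 < Prγ1 a z → ∀ a', a' ≠ a → Prγ1 a' z = 0)
    (h2compat : ∀ z, 0 < Prγ2 (α z) z)
    (h2strong : ∀ a z, 0 < Prγ2 a z → ∀ a', a' ≠ a → Prγ2 a' z = 0) :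
    ∀ (zi : Z) (ao : A),
      (∑ zo ∈ Finset.univ.filter (fun zo : Z => 0 < Prγ1 ao zo),
          ∑ a : A, Prγ1 a zo * PrA (α zi) a)
        = (∑ zo ∈ Finset.univ.filter (fun zo : Z => 0 < Prγ2 ao zo),
            ∑ a : A, Prγ2 a zo * PrA (α zi) a) := by
  intro zi ao
  rw [conc_inv_aux α Prγ1 PrA h1nn h1sum h1compat h1strong zi ao,
      conc_inv_aux α Prγ2 PrA h2nn h2sum h2compat h2strong zi ao]
end

section
/- (Probabilistic safety verification.) Let C : Z → Z be a concrete program and (𝒜, α, Prγ) a sound probabilistic over-approximation of C (i.e., Prext z (C z) > 0 for all z). Let B ⊆ Z. If for all abstract states a, a' with Pr𝒜 a a' > 0 we have γ↓ a' ∩ B = ∅, where γ↓ a' = {z | Prγ a' z > 0}, then C z ∉ B for every concrete state z. -/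
theorem probabilistic_safety_verification
    {Z A : Type*} [Fintype Z] [Fintype A]
    (C : Z → Z) (α : Z → A) (Prγ : A → Z → ℝ) (PrA : A → A → ℝ)
    (hγnn : ∀ a z, 0 ≤ Prγ a z) (hγsum : ∀ a, ∑ z, Prγ a z = 1)
    (hAnn : ∀ a a', 0 ≤ PrA a a') (hAsum : ∀ a, ∑ a', PrA a a' = 1)
    (hsound : ∀ z : Z, 0 < ∑ ao : A, Prγ ao (C z) * PrA (α z) ao)
    (B : Set Z)
    (hsafe : ∀ a a' : A, 0 < PrA a a' → {z : Z | 0 < Prγ a' z} ∩ B = ∅) :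
    ∀ z : Z, C z ∉ B := by
  intro z hB
  obtain ⟨ao, -, hpos⟩ := Finset.exists_lt_of_sum_lt (f := fun _ : A => (0:ℝ))
    (by simpa using hsound z)
  rcases mul_pos_iff.mp hpos with ⟨h1, h2⟩ | ⟨h1, h2⟩
  · have := hsafe (α z) ao h2
    have : C z ∈ ({z : Z | 0 < Prγ ao z} ∩ B) := ⟨h1, hB⟩
    simp_all
  · exact absurd h1 (not_lt.mpr (hγnn ao (C z)))
end
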